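/- Let s be a rational number and let r > 0 be a real number with r^2 rational. If J_s(r) ≠ 0, then r · J_{s+1}(r) / J_s(r) is irrational. -/

import Mathlib

/-!
With `c = r² / 4` one has `J_ν(r) = (r/2)^ν g(c, ν)`, where
`g(c, ν) = besselSeries c ν = ∑ (-c)^k / (k! Γ(ν+k+1))` satisfies
`c g(c, ν+2) = (ν+1) g(c, ν+1) - g(c, ν)` and `g(c, ν+n) = O(1/n!)`.
If `c`, `s` and `g(c, s+1) / g(c, s)` were all rational, the recurrence would make
`D Lⁿ g(c, s+n)` an integer multiple of `g(c, s)` for fixed integers `D, L ≠ 0`. These numbers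
tend to `0`, so they vanish for large `n`; but by the recurrence, `g(c, s+n)` and `g(c, s+n+1)`
never vanish together.
-/

/-- The Bessel function of the first kind of order `ν`, for `r > 0`:
`J_ν(r) = ∑_{k=0}^∞ ((-1)^k / (k! Γ(ν+k+1))) (r/2)^(ν+2k)`. -/
noncomputable def besselJ (ν r : ℝ) : ℝ :=
  ∑' k : ℕ, ((-1 : ℝ) ^ k / (k.factorial * Real.Gamma (ν + k + 1))) *
    (r / 2) ^ (ν + 2 * (k : ℝ))

open Real Filter Topology
open scoped Nat

namespace Real

theorem Gamma_mul_factorial_le_Gamma_add_nat {x : ℝ} (hx : 1 ≤ x) (m : ℕ) :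
    Gamma x * m ! ≤ Gamma (x + m) := by
  induction m with
  | zero => simp
  | succ m ih =>
    have hxm : 0 < x + m := by positivity
    calc Gamma x * (m + 1)! = (m + 1) * (Gamma x * m !) := by
          push_cast [Nat.factorial_succ]; ring
      _ ≤ (x + m) * Gamma (x + m) := mul_le_mul (by linarith) ih (by positivity) hxm.le
      _ = Gamma (x + ↑(m + 1)) := by
        rw [Nat.cast_succ, ← add_assoc, Gamma_add_one hxm.ne']

theorem Gamma_le_Gamma_add_nat {x : ℝ} (hx : 1 ≤ x) (m : ℕ) : Gamma x ≤ Gamma (x + m) :=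
  calc Gamma x ≤ Gamma x * m ! :=
        le_mul_of_one_le_right (Gamma_pos_of_pos (by linarith)).le (mod_cast m.factorial_pos)
    _ ≤ Gamma (x + m) := Gamma_mul_factorial_le_Gamma_add_nat hx m

-- Also true at the poles `x = -m`, where Mathlib's `Gamma` is `0` at both `x` and `x + 1`.
theorem inv_Gamma_eq_mul_inv_Gamma_add_one (x : ℝ) :
    (Gamma x)⁻¹ = x * (Gamma (x + 1))⁻¹ := by
  by_cases hx : x = 0
  · simp [hx]
  by_cases hΓ : Gamma x = 0
  · obtain ⟨m, rfl⟩ := (Gamma_eq_zero_iff x).mp hΓ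
    rcases m with _ | k
    · simp at hx
    have : Gamma (-↑(k + 1) + 1) = 0 := (Gamma_eq_zero_iff _).mpr ⟨k, by push_cast; ring⟩
    rw [hΓ, this, inv_zero, mul_zero]
  · rw [Gamma_add_one hx, mul_inv, ← mul_assoc, mul_inv_cancel₀ hx, one_mul]

end Real

noncomputable def besselSeries (c ν : ℝ) : ℝ :=
  ∑' k : ℕ, (-c) ^ k / (k ! * Gamma (ν + k + 1))

theorem abs_besselSeries_term_le (c : ℝ) {ν : ℝ} {k₀ k : ℕ} (hν : 0 ≤ ν + k₀)
    (hk : k₀ ≤ k) :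
    |(-c) ^ k / (k ! * Gamma (ν + k + 1))| ≤ |c| ^ k / k ! / Gamma (ν + k₀ + 1) := by
  obtain ⟨m, rfl⟩ := Nat.exists_eq_add_of_le hk
  have hΓpos : 0 < Gamma (ν + k₀ + 1) := Gamma_pos_of_pos (by linarith)
  have hΓ : Gamma (ν + k₀ + 1) ≤ Gamma (ν + ↑(k₀ + m) + 1) := by
    convert Gamma_le_Gamma_add_nat (x := ν + k₀ + 1) (by linarith) m using 2
    push_cast; ring
  rw [abs_div, abs_mul, abs_pow, abs_neg, Nat.abs_cast, abs_of_pos (hΓpos.trans_le hΓ), div_div]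
  gcongr

theorem summable_besselSeries_term (c ν : ℝ) :
    Summable fun k : ℕ => (-c) ^ k / (k ! * Gamma (ν + k + 1)) := by
  obtain ⟨k₀, hk₀⟩ := exists_nat_ge (-ν)
  refine ((summable_pow_div_factorial |c|).div_const
    (Gamma (ν + k₀ + 1))).of_norm_bounded_eventually_nat ?_
  filter_upwards [eventually_ge_atTop k₀] with k hk
  exact abs_besselSeries_term_le c (by linarith) hk

theorem abs_besselSeries_le (c : ℝ) {ν : ℝ} (hν : 0 ≤ ν) :
    |besselSeries c ν| ≤ exp |c| / Gamma (ν + 1) := by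
  have hsum := summable_besselSeries_term c ν
  calc |besselSeries c ν| ≤ ∑' k : ℕ, |(-c) ^ k / (k ! * Gamma (ν + k + 1))| :=
        norm_tsum_le_tsum_norm hsum.norm
    _ ≤ ∑' k : ℕ, |c| ^ k / k ! / Gamma (ν + 1) := by
        refine hsum.abs.tsum_le_tsum (fun k => ?_) ((summable_pow_div_factorial _).div_const _)
        simpa using abs_besselSeries_term_le c (k₀ := 0) (by simpa) k.zero_le
    _ = exp |c| / Gamma (ν + 1) := by
        rw [tsum_div_const, exp_eq_exp_ℝ, NormedSpace.exp_eq_tsum_div]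

theorem abs_besselSeries_add_nat_le (c : ℝ) {ν : ℝ} (hν : 0 ≤ ν) (n : ℕ) :
    |besselSeries c (ν + n)| ≤ exp |c| / Gamma (ν + 1) / n ! := by
  have hΓ : Gamma (ν + 1) * n ! ≤ Gamma (ν + n + 1) := by
    rw [add_right_comm]; exact Gamma_mul_factorial_le_Gamma_add_nat (by linarith) n
  calc |besselSeries c (ν + n)| ≤ exp |c| / Gamma (ν + n + 1) :=
        abs_besselSeries_le c (by positivity)
    _ ≤ exp |c| / (Gamma (ν + 1) * n !) := by
        have := Gamma_pos_of_pos (show 0 < ν + 1 by linarith)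
        gcongr
    _ = exp |c| / Gamma (ν + 1) / n ! := (div_div _ _ _).symm

theorem tendsto_pow_mul_besselSeries_add_nat (c ν L : ℝ) :
    Tendsto (fun n : ℕ => L ^ n * besselSeries c (ν + n)) atTop (𝓝 0) := by
  have of_nonneg : ∀ {μ : ℝ}, 0 ≤ μ →
      Tendsto (fun n : ℕ => L ^ n * besselSeries c (μ + n)) atTop (𝓝 0) := by
    intro μ hμ
    have h := (FloorSemiring.tendsto_pow_div_factorial_atTop |L|).const_mul
      (exp |c| / Gamma (μ + 1))
    rw [mul_zero] at h
    refine squeeze_zero_norm (fun n => ?_) h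
    calc ‖L ^ n * besselSeries c (μ + n)‖ = |L| ^ n * |besselSeries c (μ + n)| := by
          rw [norm_mul, norm_pow, norm_eq_abs, norm_eq_abs]
      _ ≤ |L| ^ n * (exp |c| / Gamma (μ + 1) / n !) := by
          gcongr; exact abs_besselSeries_add_nat_le c hμ n
      _ = exp |c| / Gamma (μ + 1) * (|L| ^ n / n !) := by ring
  obtain ⟨k₀, hk₀⟩ := exists_nat_ge (-ν)
  have hshift : (fun n : ℕ => L ^ (n + k₀) * besselSeries c (ν + ↑(n + k₀))) =
      fun n : ℕ => L ^ k₀ * (L ^ n * besselSeries c (ν + k₀ + n)) := by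
    funext n
    rw [pow_add, Nat.cast_add, add_comm (n : ℝ), ← add_assoc]
    ring
  rw [← tendsto_add_atTop_iff_nat k₀, hshift]
  simpa using (of_nonneg (μ := ν + k₀) (by linarith)).const_mul (L ^ k₀)

theorem besselSeries_recurrence (c ν : ℝ) :
    c * besselSeries c (ν + 2) = (ν + 1) * besselSeries c (ν + 1) - besselSeries c ν := by
  let a : ℝ → ℕ → ℝ := fun μ k => (-c) ^ k / (k ! * Gamma (μ + k + 1))
  let b : ℕ → ℝ := fun k => (-c) ^ k * k / (k ! * Gamma (ν + k + 1 + 1))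
  have hab : ∀ k, a ν k - (ν + 1) * a (ν + 1) k = b k := by
    intro k
    simp only [a, b, div_eq_mul_inv, mul_inv, inv_Gamma_eq_mul_inv_Gamma_add_one (ν + k + 1),
      show ν + 1 + k + 1 = ν + k + 1 + 1 by ring]
    ring
  have hb_succ : ∀ k, b (k + 1) = -c * a (ν + 2) k := by
    intro k
    simp only [a, b]
    rw [show ν + ((k + 1 : ℕ) : ℝ) + 1 + 1 = ν + 2 + k + 1 by push_cast; ring,
      Nat.factorial_succ]
    push_cast
    field_simp
    ring
  have hb : HasSum b (besselSeries c ν - (ν + 1) * besselSeries c (ν + 1)) :=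
    ((summable_besselSeries_term c ν).hasSum.sub
      ((summable_besselSeries_term c (ν + 1)).hasSum.mul_left (ν + 1))).congr_fun
      fun k => (hab k).symm
  have hb' : HasSum (fun k => b (k + 1)) (-c * besselSeries c (ν + 2)) :=
    ((summable_besselSeries_term c (ν + 2)).hasSum.mul_left (-c)).congr_fun hb_succ
  have hb0 : b 0 = 0 := by simp [b]
  have h := ((hasSum_nat_add_iff' 1).mpr hb).unique hb'
  rw [Finset.sum_range_one, hb0, sub_zero] at h
  linarith

theorem besselSeries_add_nat_ne_zero_or {c ν : ℝ} (hν : besselSeries c ν ≠ 0) (n : ℕ) :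
    besselSeries c (ν + n) ≠ 0 ∨ besselSeries c (ν + n + 1) ≠ 0 := by
  induction n with
  | zero => left; simpa using hν
  | succ n ih =>
    by_contra! h
    rw [Nat.cast_succ, ← add_assoc, add_assoc _ 1 1, one_add_one_eq_two] at h
    have hrec := besselSeries_recurrence c (ν + n)
    rw [h.1, h.2] at hrec
    rcases ih with ih | ih
    · exact ih (by linarith)
    · exact ih h.1

theorem AddSubgroup.mem_of_linear_recurrence {M : Type*} [AddCommGroup M]
    (H : AddSubgroup M) {x : ℕ → M} {α β : ℕ → ℤ}
    (hrec : ∀ n, x (n + 2) = α n • x (n + 1) + β n • x n)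
    (h0 : x 0 ∈ H) (h1 : x 1 ∈ H) (n : ℕ) : x n ∈ H := by
  induction n using Nat.twoStepInduction with
  | zero => exact h0
  | one => exact h1
  | more n hn hn1 => rw [hrec]; exact H.add_mem (H.zsmul_mem hn1 _) (H.zsmul_mem hn _)

theorem eventually_eq_zero_of_mem_zmultiples {ι : Type*} {l : Filter ι} {G : ℝ} (hG : G ≠ 0)
    {x : ι → ℝ} (hx : ∀ i, x i ∈ AddSubgroup.zmultiples G) (hlim : Tendsto x l (𝓝 0)) :
    ∀ᶠ i in l, x i = 0 := by
  filter_upwards [hlim.eventually (Metric.ball_mem_nhds 0 (abs_pos.mpr hG))] with i hi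
  obtain ⟨m, hm⟩ := AddSubgroup.mem_zmultiples_iff.mp (hx i)
  rw [← hm, Real.dist_eq, sub_zero, zsmul_eq_mul, abs_mul,
    mul_lt_iff_lt_one_left (abs_pos.mpr hG)] at hi
  rw [← hm, Int.abs_lt_one_iff.mp (mod_cast hi : |m| < 1), zero_smul]

theorem besselSeries_scaled_mem_zmultiples {c s q : ℚ}
    (hq : besselSeries c (s + 1) = q * besselSeries c s) (n : ℕ) :
    ((q.den * (s.den * c.num) ^ n : ℤ) : ℝ) * besselSeries c (s + n) ∈
      AddSubgroup.zmultiples (besselSeries c s) := by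
  have hs : (s : ℝ) * s.den = s.num := by exact_mod_cast Rat.mul_den_eq_num s
  have hcd : (c : ℝ) * c.den = c.num := by exact_mod_cast Rat.mul_den_eq_num c
  have hqd : (q : ℝ) * q.den = q.num := by exact_mod_cast Rat.mul_den_eq_num q
  refine AddSubgroup.mem_of_linear_recurrence _
    (x := fun n : ℕ => ((q.den * (s.den * c.num) ^ n : ℤ) : ℝ) * besselSeries c (s + n))
    (α := fun n => c.den * (s.num + (n + 1) * s.den))
    (β := fun n => -(c.den * s.den * (s.den * c.num))) (fun n => ?_) ?_ ?_ n
  · -- multiply the recurrence at `s + n` by `q.den Lⁿ⁺¹ s.den c.den`, where `L = s.den c.num`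
    have hrec := besselSeries_recurrence c (s + n)
    simp only [zsmul_eq_mul, Nat.cast_add, Nat.cast_ofNat, Nat.cast_one, ← add_assoc]
    push_cast
    linear_combination (q.den * (s.den * c.num) ^ (n + 1) * s.den * c.den : ℝ) * hrec
      + (q.den * (s.den * c.num) ^ (n + 1) * c.den * besselSeries c ((s : ℝ) + n + 1)) * hs
      - (q.den * (s.den * c.num) ^ (n + 1) * s.den * besselSeries c ((s : ℝ) + n + 2)) * hcd
  · exact ⟨q.den, by simp⟩
  · refine ⟨s.den * c.num * q.num, ?_⟩
    simp only [zsmul_eq_mul, Nat.cast_one, hq]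
    push_cast
    linear_combination -(s.den * c.num * besselSeries c s : ℝ) * hqd

theorem irrational_besselSeries_div {c s : ℚ} (hc : c ≠ 0) (hs : besselSeries c s ≠ 0) :
    Irrational (besselSeries c (s + 1) / besselSeries c s) := by
  rintro ⟨q, hq⟩
  have h1 : besselSeries c (s + 1) = q * besselSeries c s := by rw [hq, div_mul_cancel₀ _ hs]
  set L : ℤ := s.den * c.num
  have hL : L ≠ 0 := mul_ne_zero (by exact_mod_cast s.den_nz) (Rat.num_ne_zero.mpr hc)
  have hlim : Tendsto (fun n : ℕ => ((q.den * L ^ n : ℤ) : ℝ) * besselSeries c (s + n))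
      atTop (𝓝 0) := by
    simpa [mul_assoc] using (tendsto_pow_mul_besselSeries_add_nat c s L).const_mul (q.den : ℝ)
  obtain ⟨N, hN⟩ := (eventually_eq_zero_of_mem_zmultiples hs
    (besselSeries_scaled_mem_zmultiples h1) hlim).exists_forall_of_atTop
  have hzero : ∀ n ≥ N, besselSeries c (s + n) = 0 := fun n hn =>
    (mul_eq_zero.mp (hN n hn)).resolve_left (by have := q.den_nz; positivity)
  rcases besselSeries_add_nat_ne_zero_or hs N with h | h
  · exact h (hzero N le_rfl)
  · exact h (by simpa [add_assoc] using hzero (N + 1) (by omega))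

theorem besselJ_eq_rpow_mul_besselSeries (ν : ℝ) {r : ℝ} (hr : 0 < r) :
    besselJ ν r = (r / 2) ^ ν * besselSeries ((r / 2) ^ 2) ν := by
  rw [besselJ, besselSeries, ← tsum_mul_left]
  refine tsum_congr fun k => ?_
  rw [rpow_add (by positivity), show (2 : ℝ) * k = ((2 * k : ℕ) : ℝ) by push_cast; ring,
    rpow_natCast, pow_mul, neg_pow ((r / 2) ^ 2)]
  ring

theorem besselJ_ratio_irrational (s : ℚ) (r : ℝ) (hr : 0 < r)
    (hq : ∃ q : ℚ, r ^ 2 = (q : ℝ)) (hJ : besselJ (s : ℝ) r ≠ 0) :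
    Irrational (r * besselJ ((s : ℝ) + 1) r / besselJ (s : ℝ) r) := by
  obtain ⟨q, hq⟩ := hq
  set c : ℚ := q / 4
  have hc : (r / 2) ^ 2 = (c : ℝ) := by push_cast [c]; rw [← hq]; ring
  have hc0 : c ≠ 0 := by rw [← Rat.cast_ne_zero (α := ℝ), ← hc]; positivity
  have hJs : besselSeries c s ≠ 0 := by
    rw [besselJ_eq_rpow_mul_besselSeries _ hr, hc] at hJ
    exact right_ne_zero_of_mul hJ
  have hratio : r * besselJ (s + 1) r / besselJ s r =
      ((2 * c : ℚ) : ℝ) * (besselSeries c (s + 1) / besselSeries c s) := by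
    have hpow : (r / 2) ^ (s : ℝ) ≠ 0 := (rpow_pos_of_pos (by positivity) _).ne'
    rw [besselJ_eq_rpow_mul_besselSeries _ hr, besselJ_eq_rpow_mul_besselSeries _ hr, hc,
      rpow_add (by positivity), rpow_one, Rat.cast_mul, Rat.cast_ofNat, ← hc]
    field_simp
  rw [hratio]
  exact (irrational_besselSeries_div hc0 hJs).ratCast_mul (mul_ne_zero two_ne_zero hc0)
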